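/- arXiv:2507.22379 — 4 statements merged into one kernel-verified Lean document; each statement's English description precedes it below -/
import Mathlib

section
/- Let $\alpha \in (1,2)$ and $H \in (1-\alpha/2, 1/2)$. There exists a constant $c > 0$ such that for all $t > 0$, all $x, y \in \mathbb{R}$ with $|x-y| \ge t^{1/\alpha}$, and all $h$ with $0 < h \le \min\{\frac{3}{64}|x-y|, \frac{\pi}{4}(\frac{2}{\ln 2})^{1/\alpha} t^{1/\alpha}\}$, one has $\int_0^{\infty} (1-e^{-2t\xi^{\alpha}})(1-\cos(h\xi))(1-\cos(|x-y|\xi))\,\xi^{1-2H-\alpha}\,d\xi \ge c\, h^{2H+\alpha-2}$. -/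
/-!
The integrand is nonnegative, so it suffices to bound it from below on the window
`ξ ∈ (π / (2h), π / h]`. There `cos (h ξ) ≤ 0`, the upper bound on `h` in terms of `t ^ (1/α)`
forces `2 t ξ ^ α ≥ 2 log 2`, i.e. `1 - exp (-2 t ξ ^ α) ≥ 3/4`, and `ξ ^ p ≥ (π / h) ^ p`
since `p = 1 - 2H - α < 0`. What remains is `∫ (1 - cos (r ξ))` over the window, which is at
least its length `π / (2h)` minus `2 / r ≤ 3 / (32 h)`; this gives a multiple of
`h ^ (-p - 1) = h ^ (2H + α - 2)`. Integrability comes from `ξ ^ (1 - 2H)` near `0` and `ξ ^ p`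
near `∞`.
-/

open Real MeasureTheory Set

lemma integrableOn_Ioi_zero_of_rpow_bounds {f : ℝ → ℝ} {p q C D : ℝ}
    (hf : AEStronglyMeasurable f (volume.restrict (Ioi 0))) (hq : -1 < q) (hp : p < -1)
    (h_zero : ∀ ξ ∈ Ioc (0 : ℝ) 1, ‖f ξ‖ ≤ C * ξ ^ q)
    (h_infty : ∀ ξ ∈ Ioi (1 : ℝ), ‖f ξ‖ ≤ D * ξ ^ p) :
    IntegrableOn f (Ioi 0) := by
  rw [← Ioc_union_Ioi_eq_Ioi zero_le_one]
  refine IntegrableOn.union ?_ ?_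
  · refine Integrable.mono' (((intervalIntegral.intervalIntegrable_rpow' hq).1).const_mul C)
      (hf.mono_measure (Measure.restrict_mono Ioc_subset_Ioi_self le_rfl)) ?_
    exact (ae_restrict_mem measurableSet_Ioc).mono h_zero
  · refine Integrable.mono' ((integrableOn_Ioi_rpow_of_lt hp one_pos).const_mul D)
      (hf.mono_measure (Measure.restrict_mono (Ioi_subset_Ioi zero_le_one) le_rfl)) ?_
    exact (ae_restrict_mem measurableSet_Ioi).mono h_infty

lemma integral_one_sub_cos_mul {r : ℝ} (hr : r ≠ 0) (a b : ℝ) :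
    ∫ ξ in a..b, (1 - cos (r * ξ)) = b - a - (sin (r * b) - sin (r * a)) / r := by
  rw [intervalIntegral.integral_sub intervalIntegrable_const
    ((by fun_prop : Continuous fun ξ : ℝ => cos (r * ξ)).intervalIntegrable a b),
    intervalIntegral.integral_comp_mul_left cos hr, integral_cos]
  simp [smul_eq_mul, div_eq_inv_mul]

lemma sub_sub_two_div_le_integral_one_sub_cos_mul {r a b : ℝ} (hr : 0 < r) :
    b - a - 2 / r ≤ ∫ ξ in a..b, (1 - cos (r * ξ)) := by
  rw [integral_one_sub_cos_mul hr.ne']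
  have : sin (r * b) - sin (r * a) ≤ 2 := by
    linarith [sin_le_one (r * b), neg_one_le_sin (r * a)]
  gcongr

lemma le_setIntegral_Ioi_of_one_sub_cos_le {f : ℝ → ℝ} {a b r K : ℝ}
    (hfi : IntegrableOn f (Ioi 0)) (hf : ∀ ξ ∈ Ioi (0 : ℝ), 0 ≤ f ξ) (ha : 0 ≤ a) (hab : a ≤ b)
    (hr : 0 < r) (hK : 0 ≤ K) (hfK : ∀ ξ ∈ Ioc a b, K * (1 - cos (r * ξ)) ≤ f ξ) :
    K * (b - a - 2 / r) ≤ ∫ ξ in Ioi 0, f ξ := by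
  have hsub : Ioc a b ⊆ Ioi 0 := fun ξ hξ => ha.trans_lt hξ.1
  calc K * (b - a - 2 / r) ≤ K * ∫ ξ in a..b, (1 - cos (r * ξ)) :=
        mul_le_mul_of_nonneg_left (sub_sub_two_div_le_integral_one_sub_cos_mul hr) hK
    _ = ∫ ξ in Ioc a b, K * (1 - cos (r * ξ)) := by
        rw [← intervalIntegral.integral_const_mul, intervalIntegral.integral_of_le hab]
    _ ≤ ∫ ξ in Ioc a b, f ξ :=
        setIntegral_mono_on
          (by fun_prop : Continuous fun ξ => K * (1 - cos (r * ξ))).integrableOn_Ioc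
          (hfi.mono_set hsub) measurableSet_Ioc hfK
    _ ≤ ∫ ξ in Ioi 0, f ξ :=
        setIntegral_mono_set hfi ((ae_restrict_mem measurableSet_Ioi).mono hf)
          hsub.eventuallyLE

lemma one_sub_cos_nonneg (x : ℝ) : 0 ≤ 1 - cos x := sub_nonneg.2 (cos_le_one x)

lemma one_sub_cos_le_two (x : ℝ) : 1 - cos x ≤ 2 := by linarith [neg_one_le_cos x]

lemma one_sub_exp_neg_nonneg {u : ℝ} (hu : 0 ≤ u) : 0 ≤ 1 - exp (-u) :=
  sub_nonneg.2 (exp_le_one_iff.2 (neg_nonpos.2 hu))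

lemma one_sub_exp_neg_le (u : ℝ) : 1 - exp (-u) ≤ u := by linarith [add_one_le_exp (-u)]

lemma one_sub_exp_neg_le_one (u : ℝ) : 1 - exp (-u) ≤ 1 := by linarith [exp_pos (-u)]

noncomputable def incrementIntegrand (α t h r p ξ : ℝ) : ℝ :=
  (1 - exp (-2 * t * ξ ^ α)) * (1 - cos (h * ξ)) * (1 - cos (r * ξ)) * ξ ^ p

section incrementIntegrand

variable {α t h r p ξ : ℝ}

lemma incrementIntegrand_eq (α t h r p ξ : ℝ) :
    incrementIntegrand α t h r p ξ =
      (1 - exp (-(2 * t * ξ ^ α))) * (1 - cos (h * ξ)) * (1 - cos (r * ξ)) * ξ ^ p := by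
  simp only [incrementIntegrand, neg_mul]

lemma incrementIntegrand_nonneg (ht : 0 ≤ t) (hξ : 0 ≤ ξ) :
    0 ≤ incrementIntegrand α t h r p ξ := by
  rw [incrementIntegrand_eq]
  have := one_sub_exp_neg_nonneg (by positivity : 0 ≤ 2 * t * ξ ^ α)
  have := one_sub_cos_nonneg (h * ξ)
  have := one_sub_cos_nonneg (r * ξ)
  positivity

lemma incrementIntegrand_le_four_mul (ht : 0 ≤ t) (hξ : 0 ≤ ξ) :
    incrementIntegrand α t h r p ξ ≤ 4 * (1 - exp (-(2 * t * ξ ^ α))) * ξ ^ p := by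
  rw [incrementIntegrand_eq]
  have := one_sub_exp_neg_nonneg (by positivity : 0 ≤ 2 * t * ξ ^ α)
  have := one_sub_cos_nonneg (h * ξ)
  have := one_sub_cos_nonneg (r * ξ)
  have := one_sub_cos_le_two (h * ξ)
  have := one_sub_cos_le_two (r * ξ)
  calc _ ≤ (1 - exp (-(2 * t * ξ ^ α))) * 2 * 2 * ξ ^ p := by gcongr
    _ = _ := by ring

lemma incrementIntegrand_le_rpow_add (ht : 0 ≤ t) (hξ : 0 < ξ) :
    incrementIntegrand α t h r p ξ ≤ 8 * t * ξ ^ (α + p) := by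
  calc _ ≤ 4 * (1 - exp (-(2 * t * ξ ^ α))) * ξ ^ p := incrementIntegrand_le_four_mul ht hξ.le
    _ ≤ 4 * (2 * t * ξ ^ α) * ξ ^ p := by gcongr; exact one_sub_exp_neg_le _
    _ = 8 * t * ξ ^ (α + p) := by rw [rpow_add hξ]; ring

lemma incrementIntegrand_le_rpow (ht : 0 ≤ t) (hξ : 0 ≤ ξ) :
    incrementIntegrand α t h r p ξ ≤ 4 * ξ ^ p := by
  calc _ ≤ 4 * (1 - exp (-(2 * t * ξ ^ α))) * ξ ^ p := incrementIntegrand_le_four_mul ht hξ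
    _ ≤ 4 * 1 * ξ ^ p := by gcongr; exact one_sub_exp_neg_le_one _
    _ = 4 * ξ ^ p := by ring

lemma integrableOn_incrementIntegrand (ht : 0 ≤ t) (hαp : -1 < α + p) (hp : p < -1) :
    IntegrableOn (incrementIntegrand α t h r p) (Ioi 0) := by
  refine integrableOn_Ioi_zero_of_rpow_bounds (C := 8 * t) (D := 4)
    (by unfold incrementIntegrand; fun_prop) hαp hp (fun ξ hξ => ?_) (fun ξ hξ => ?_)
  · rw [norm_of_nonneg (incrementIntegrand_nonneg ht hξ.1.le)]
    exact incrementIntegrand_le_rpow_add ht hξ.1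
  · have hξ0 : (0 : ℝ) ≤ ξ := zero_le_one.trans (le_of_lt hξ)
    rw [norm_of_nonneg (incrementIntegrand_nonneg ht hξ0)]
    exact incrementIntegrand_le_rpow ht hξ0

end incrementIntegrand

lemma log_two_le_mul_rpow {α t ξ : ℝ} (hα : 1 ≤ α) (ht : 0 < t)
    (hξ : 2 / ((2 / log 2) ^ (1 / α) * t ^ (1 / α)) ≤ ξ) : log 2 ≤ t * ξ ^ α := by
  have hα0 : α ≠ 0 := by positivity
  have hlog : 0 < log 2 := log_pos one_lt_two
  have hs : ((2 / log 2) ^ (1 / α) * t ^ (1 / α)) ^ α = 2 * t / log 2 := by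
    rw [← mul_rpow (by positivity) ht.le, ← rpow_mul (by positivity), one_div_mul_cancel hα0,
      rpow_one, div_mul_eq_mul_div]
  have h2α : (2 : ℝ) ≤ 2 ^ α := by simpa using rpow_le_rpow_of_exponent_le one_le_two hα
  have hξα : 2 ^ α * log 2 / (2 * t) ≤ ξ ^ α := by
    calc 2 ^ α * log 2 / (2 * t) = (2 / ((2 / log 2) ^ (1 / α) * t ^ (1 / α))) ^ α := by
          rw [div_rpow zero_le_two (by positivity), hs]
          field_simp
      _ ≤ ξ ^ α := by gcongr
  rw [div_le_iff₀ (by positivity)] at hξα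
  nlinarith

lemma three_quarters_le_one_sub_exp_neg_two_mul {u : ℝ} (hu : log 2 ≤ u) :
    3 / 4 ≤ 1 - exp (-(2 * u)) := by
  have : exp (-(2 * u)) ≤ 1 / 4 := by
    calc exp (-(2 * u)) ≤ exp (-(2 * log 2)) := by gcongr
      _ = 1 / 4 := by
        rw [exp_neg, ← log_rpow zero_lt_two, exp_log (by positivity)]
        norm_num
  linarith

lemma mul_one_sub_cos_le_incrementIntegrand {α t h r p ξ : ℝ} (hα : 1 ≤ α) (ht : 0 < t)
    (hh : 0 < h) (hhL : h ≤ π / 4 * (2 / log 2) ^ (1 / α) * t ^ (1 / α)) (hp : p ≤ 0)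
    (hξ : ξ ∈ Ioc (π / (2 * h)) (π / h)) :
    3 / 4 * (π / h) ^ p * (1 - cos (r * ξ)) ≤ incrementIntegrand α t h r p ξ := by
  obtain ⟨hξa, hξb⟩ := hξ
  have hξ0 : 0 < ξ := lt_trans (by positivity) hξa
  have hexp : 3 / 4 ≤ 1 - exp (-(2 * t * ξ ^ α)) := by
    rw [mul_assoc]
    refine three_quarters_le_one_sub_exp_neg_two_mul (log_two_le_mul_rpow hα ht ?_)
    refine le_trans ?_ hξa.le
    rw [div_le_div_iff₀ (by positivity) (by positivity)]
    nlinarith [pi_pos]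
  have hcos : 1 ≤ 1 - cos (h * ξ) := by
    have : cos (h * ξ) ≤ 0 := by
      apply cos_nonpos_of_pi_div_two_le_of_le
      · rw [div_lt_iff₀ (by positivity)] at hξa
        linarith
      · rw [le_div_iff₀ hh] at hξb
        linarith [pi_pos]
    linarith
  have hrpow : (π / h) ^ p ≤ ξ ^ p := rpow_le_rpow_of_nonpos hξ0 hξb hp
  have := one_sub_cos_nonneg (r * ξ)
  rw [incrementIntegrand_eq]
  calc _ = 3 / 4 * 1 * (1 - cos (r * ξ)) * (π / h) ^ p := by ring
    _ ≤ _ := by gcongr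

theorem stmt_10_general (α H : ℝ) (hα : 1 < α)
    (hH1 : 1 - α / 2 < H) (hH2 : H < 1 / 2) :
    ∃ c > 0, ∀ t : ℝ, 0 < t → ∀ x y : ℝ, |x - y| ≥ t ^ (1 / α) →
      ∀ h : ℝ, 0 < h →
        h ≤ min (3 / 64 * |x - y|) (π / 4 * (2 / Real.log 2) ^ (1 / α) * t ^ (1 / α)) →
        ∫ ξ in Set.Ioi (0:ℝ),
            (1 - Real.exp (-2 * t * ξ ^ α)) * (1 - Real.cos (h * ξ))
              * (1 - Real.cos (|x - y| * ξ)) * ξ ^ (1 - 2 * H - α)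
          ≥ c * h ^ (2 * H + α - 2) := by
  set p := 1 - 2 * H - α
  have hπ : 3 / 32 < π / 2 := by linarith [pi_gt_three]
  refine ⟨3 / 4 * (π / 2 - 3 / 32) * π ^ p, by have := sub_pos.2 hπ; positivity, ?_⟩
  intro t ht x y _ h hh hh_le
  have hr : 64 * h ≤ 3 * |x - y| := by linarith [hh_le.trans (min_le_left _ _)]
  have hr0 : 0 < |x - y| := by linarith
  have hlower := le_setIntegral_Ioi_of_one_sub_cos_le
    (integrableOn_incrementIntegrand (h := h) (r := |x - y|) (p := p) ht.le (by linarith)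
      (by linarith))
    (fun ξ hξ => incrementIntegrand_nonneg ht.le hξ.le) (by positivity)
    (div_le_div_of_nonneg_left pi_pos.le (by positivity) (by linarith)) hr0 (by positivity)
    (fun ξ hξ => mul_one_sub_cos_le_incrementIntegrand hα.le ht hh
      (hh_le.trans (min_le_right _ _)) (by linarith) hξ)
  refine le_trans ?_ hlower
  have h2r : 2 / |x - y| ≤ 3 / (32 * h) := by
    rw [div_le_div_iff₀ hr0 (by positivity)]
    linarith
  calc 3 / 4 * (π / 2 - 3 / 32) * π ^ p * h ^ (2 * H + α - 2)
      = 3 / 4 * (π / h) ^ p * (π / h - π / (2 * h) - 3 / (32 * h)) := by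
        rw [show 2 * H + α - 2 = -p - 1 by ring, rpow_sub hh, rpow_neg hh.le, rpow_one,
          div_rpow pi_pos.le hh.le]
        field_simp
        ring
    _ ≤ _ := by gcongr

theorem stmt_10 (α H : ℝ) (hα : 1 < α) (hα2 : α < 2)
    (hH1 : 1 - α / 2 < H) (hH2 : H < 1 / 2) :
    ∃ c > 0, ∀ t : ℝ, 0 < t → ∀ x y : ℝ, |x - y| ≥ t ^ (1 / α) →
      ∀ h : ℝ, 0 < h →
        h ≤ min (3 / 64 * |x - y|) (π / 4 * (2 / Real.log 2) ^ (1 / α) * t ^ (1 / α)) →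
        ∫ ξ in Set.Ioi (0:ℝ),
            (1 - Real.exp (-2 * t * ξ ^ α)) * (1 - Real.cos (h * ξ))
              * (1 - Real.cos (|x - y| * ξ)) * ξ ^ (1 - 2 * H - α)
          ≥ c * h ^ (2 * H + α - 2) :=
  stmt_10_general α H hα hH1 hH2
end

section
/- Let $\alpha \in (1,2)$ and $H \in (1-\alpha/2, 1/2)$. There exists a constant $c > 0$ such that for all $x, y \in \mathbb{R}$ with $x \ne y$ and all $\tau$ with $0 < \tau \le \left(\frac{3}{32}\right)^{\alpha}|x-y|^{\alpha}$, $\int_0^{\infty} (1-e^{-2\tau\xi^{\alpha}})(1-\cos(\xi|x-y|))\,\xi^{1-2H-\alpha}\,d\xi \ge c\, \tau^{\frac{2H+\alpha-2}{\alpha}}$. -/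
/-!
Put `A = τ^(-1/α)`. On the window `(A, 2A]` the temporal factor `1 - e^(-2τξ^α)` is at least
`1 - e⁻²` and `ξ^(1-2H-α) ≥ (2A)^(1-2H-α)`, while `∫_A^{2A} (1 - cos (ξ|x-y|)) dξ ≥ A - 2/|x-y|`,
which is at least `13A/16` because `A|x-y| ≥ 32/3`. The integrand is nonnegative and integrable
(`1 - 2H > -1` at `0`, `1 - 2H - α < -1` at `∞`), so restricting the integral to the window gives
a constant times `A^(2-2H-α) = τ^((2H+α-2)/α)`.
-/

open Real MeasureTheory Set

lemma sub_sub_two_div_le_integral_one_sub_cos {a b r : ℝ} (hr : 0 < r) :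
    b - a - 2 / r ≤ ∫ ξ in a..b, (1 - cos (ξ * r)) := by
  have hcos : Continuous fun ξ : ℝ ↦ cos (ξ * r) := by fun_prop
  rw [intervalIntegral.integral_sub intervalIntegrable_const (hcos.intervalIntegrable a b),
    intervalIntegral.integral_comp_mul_right cos hr.ne', integral_cos, smul_eq_mul,
    intervalIntegral.integral_const, smul_eq_mul, mul_one, inv_mul_eq_div]
  have : sin (b * r) - sin (a * r) ≤ 2 := by
    linarith [sin_le_one (b * r), neg_one_le_sin (a * r)]
  gcongr

/-- `p` plays the role of the exponent `1 - 2H - α`. -/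
noncomputable def temporalIncrementIntegrand (α p τ r ξ : ℝ) : ℝ :=
  (1 - exp (-2 * τ * ξ ^ α)) * (1 - cos (ξ * r)) * ξ ^ p

namespace temporalIncrementIntegrand

variable {α p τ r ξ A : ℝ}

lemma one_sub_exp_nonneg (hτ : 0 ≤ τ) (hξ : 0 ≤ ξ) : 0 ≤ 1 - exp (-2 * τ * ξ ^ α) := by
  have : 0 ≤ τ * ξ ^ α := mul_nonneg hτ (rpow_nonneg hξ α)
  linarith [exp_le_one_iff.mpr (by linarith : -2 * τ * ξ ^ α ≤ 0)]

lemma nonneg (hτ : 0 ≤ τ) (hξ : 0 ≤ ξ) : 0 ≤ temporalIncrementIntegrand α p τ r ξ :=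
  mul_nonneg (mul_nonneg (one_sub_exp_nonneg hτ hξ) (one_sub_cos_nonneg _)) (rpow_nonneg hξ p)

lemma le_two_mul_rpow (hξ : 0 ≤ ξ) : temporalIncrementIntegrand α p τ r ξ ≤ 2 * ξ ^ p := by
  have h : 1 - exp (-2 * τ * ξ ^ α) ≤ 1 := by linarith [exp_pos (-2 * τ * ξ ^ α)]
  calc _ ≤ 1 * 2 * ξ ^ p := by
        unfold temporalIncrementIntegrand
        gcongr
        · exact one_sub_cos_nonneg _
        · exact one_sub_cos_le_two _
    _ = 2 * ξ ^ p := by ring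

lemma le_mul_rpow_add (hτ : 0 ≤ τ) (hξ : 0 < ξ) :
    temporalIncrementIntegrand α p τ r ξ ≤ 4 * τ * ξ ^ (α + p) := by
  have h : 1 - exp (-2 * τ * ξ ^ α) ≤ 2 * τ * ξ ^ α := by
    rw [neg_mul, neg_mul]
    linarith [one_sub_le_exp_neg (2 * τ * ξ ^ α)]
  calc _ ≤ 2 * τ * ξ ^ α * 2 * ξ ^ p := by
        unfold temporalIncrementIntegrand
        gcongr
        · exact one_sub_cos_nonneg _
        · exact one_sub_cos_le_two _
    _ = 4 * τ * ξ ^ (α + p) := by rw [rpow_add hξ]; ring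

lemma continuousOn : ContinuousOn (temporalIncrementIntegrand α p τ r) (Ioi 0) := by
  intro ξ hξ
  apply ContinuousAt.continuousWithinAt
  unfold temporalIncrementIntegrand
  fun_prop (disch := exact Or.inl (ne_of_gt hξ))

lemma integrableOn_Ioi (hτ : 0 ≤ τ) (hαp : -1 < α + p) (hp : p < -1) :
    IntegrableOn (temporalIncrementIntegrand α p τ r) (Ioi 0) := by
  have hmeas :
      AEStronglyMeasurable (temporalIncrementIntegrand α p τ r) (volume.restrict (Ioi 0)) :=
    continuousOn.aestronglyMeasurable measurableSet_Ioi
  rw [← Ioc_union_Ioi_eq_Ioi zero_le_one]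
  refine IntegrableOn.union ?_ ?_
  · have hdom : IntegrableOn (fun ξ : ℝ ↦ 4 * τ * ξ ^ (α + p)) (Ioc 0 1) :=
      ((intervalIntegrable_iff_integrableOn_Ioc_of_le zero_le_one).mp
        (intervalIntegral.intervalIntegrable_rpow' hαp)).const_mul _
    refine hdom.mono' (hmeas.mono_set Ioc_subset_Ioi_self) ?_
    filter_upwards [ae_restrict_mem measurableSet_Ioc] with ξ hξ
    rw [norm_of_nonneg (nonneg hτ hξ.1.le)]
    exact le_mul_rpow_add hτ hξ.1
  · have hdom : IntegrableOn (fun ξ : ℝ ↦ 2 * ξ ^ p) (Ioi 1) :=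
      (integrableOn_Ioi_rpow_of_lt hp one_pos).const_mul 2
    refine hdom.mono' (hmeas.mono_set (Ioi_subset_Ioi zero_le_one)) ?_
    filter_upwards [ae_restrict_mem measurableSet_Ioi] with ξ hξ
    have hξ0 : (0 : ℝ) ≤ ξ := zero_le_one.trans hξ.le
    rw [norm_of_nonneg (nonneg hτ hξ0)]
    exact le_two_mul_rpow hξ0

lemma mul_one_sub_cos_le (hα : 0 ≤ α) (hp : p ≤ 0) (hA : 0 < A) (hτA : 1 ≤ τ * A ^ α)
    (hξ : ξ ∈ Ioc A (2 * A)) :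
    (1 - exp (-2)) * (2 * A) ^ p * (1 - cos (ξ * r)) ≤ temporalIncrementIntegrand α p τ r ξ := by
  have hξ0 : 0 < ξ := hA.trans hξ.1
  have hτ : 0 ≤ τ := (pos_of_mul_pos_left (one_pos.trans_le hτA) (rpow_nonneg hA.le α)).le
  have hexp : 1 - exp (-2) ≤ 1 - exp (-2 * τ * ξ ^ α) := by
    have : τ * A ^ α ≤ τ * ξ ^ α := by gcongr; exact hξ.1.le
    gcongr
    linarith
  calc _ = (1 - exp (-2)) * (1 - cos (ξ * r)) * (2 * A) ^ p := by ring
    _ ≤ _ := by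
      unfold temporalIncrementIntegrand
      gcongr ?_ * ?_
      · exact mul_nonneg (one_sub_exp_nonneg hτ hξ0.le) (one_sub_cos_nonneg _)
      · exact mul_le_mul_of_nonneg_right hexp (one_sub_cos_nonneg _)
      · exact rpow_le_rpow_of_nonpos hξ0 hξ.2 hp

lemma le_integral_Ioi (hα : 0 ≤ α) (hp : p ≤ 0) (hA : 0 < A) (hτA : 1 ≤ τ * A ^ α) (hr : 0 < r)
    (hint : IntegrableOn (temporalIncrementIntegrand α p τ r) (Ioi 0)) :
    (1 - exp (-2)) * (2 * A) ^ p * (A - 2 / r) ≤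
      ∫ ξ in Ioi 0, temporalIncrementIntegrand α p τ r ξ := by
  have hτ : 0 ≤ τ := (pos_of_mul_pos_left (one_pos.trans_le hτA) (rpow_nonneg hA.le α)).le
  have hsub : Ioc A (2 * A) ⊆ Ioi 0 := fun ξ hξ ↦ hA.trans hξ.1
  have hexp : 0 ≤ 1 - exp (-2) := by
    linarith [exp_le_one_iff.mpr (by norm_num : (-2 : ℝ) ≤ 0)]
  calc (1 - exp (-2)) * (2 * A) ^ p * (A - 2 / r)
      ≤ (1 - exp (-2)) * (2 * A) ^ p * ∫ ξ in A..2 * A, (1 - cos (ξ * r)) := by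
        have := sub_sub_two_div_le_integral_one_sub_cos (a := A) (b := 2 * A) hr
        gcongr
        linarith
    _ = ∫ ξ in Ioc A (2 * A), (1 - exp (-2)) * (2 * A) ^ p * (1 - cos (ξ * r)) := by
        rw [intervalIntegral.integral_of_le (by linarith), integral_const_mul]
    _ ≤ ∫ ξ in Ioc A (2 * A), temporalIncrementIntegrand α p τ r ξ :=
        setIntegral_mono_on (Continuous.integrableOn_Ioc (by fun_prop)) (hint.mono_set hsub)
          measurableSet_Ioc fun ξ hξ ↦ mul_one_sub_cos_le hα hp hA hτA hξ
    _ ≤ ∫ ξ in Ioi 0, temporalIncrementIntegrand α p τ r ξ := by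
        refine setIntegral_mono_set hint ?_ hsub.eventuallyLE
        filter_upwards [ae_restrict_mem measurableSet_Ioi] with ξ hξ
        exact nonneg hτ (le_of_lt hξ)

end temporalIncrementIntegrand

theorem stmt_11_general (α H : ℝ) (hα : 1 < α)
    (hH1 : 1 - α / 2 < H) (hH2 : H < 1 / 2) :
    ∃ c > 0, ∀ x y : ℝ, x ≠ y → ∀ τ : ℝ, 0 < τ → τ ≤ (3 / 32) ^ α * |x - y| ^ α →
      ∫ ξ in Set.Ioi (0:ℝ),
          (1 - Real.exp (-2 * τ * ξ ^ α)) * (1 - Real.cos (ξ * |x - y|)) * ξ ^ (1 - 2 * H - α)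
        ≥ c * τ ^ ((2 * H + α - 2) / α) := by
  have hα0 : 0 < α := zero_lt_one.trans hα
  set p := 1 - 2 * H - α with hp
  have hexp : 0 < 1 - exp (-2) := by
    linarith [exp_lt_one_iff.mpr (by norm_num : (-2 : ℝ) < 0)]
  refine ⟨(1 - exp (-2)) * 2 ^ p * (13 / 16), by positivity, ?_⟩
  intro x y hxy τ hτ hτle
  obtain ⟨t, ht, rfl⟩ : ∃ t > 0, t ^ α = τ :=
    ⟨τ ^ α⁻¹, rpow_pos_of_pos hτ _, rpow_inv_rpow hτ.le hα0.ne'⟩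
  have hr : 0 < |x - y| := abs_pos.mpr (sub_ne_zero.mpr hxy)
  have htr : t ≤ 3 / 32 * |x - y| := by
    rwa [← mul_rpow (by norm_num) hr.le, rpow_le_rpow_iff ht.le (by positivity) hα0] at hτle
  have hτA : 1 ≤ t ^ α * t⁻¹ ^ α := by
    rw [inv_rpow ht.le, mul_inv_cancel₀ (rpow_pos_of_pos ht α).ne']
  have hint := temporalIncrementIntegrand.integrableOn_Ioi (r := |x - y|) (rpow_nonneg ht.le α)
    (by linarith : -1 < α + p) (by linarith : p < -1)
  have hlow := temporalIncrementIntegrand.le_integral_Ioi hα0.le (by linarith) (inv_pos.mpr ht)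
    hτA hr hint
  have hscale : (t ^ α) ^ ((2 * H + α - 2) / α) = t⁻¹ ^ p * t⁻¹ := by
    rw [← rpow_mul ht.le, mul_div_cancel₀ _ hα0.ne', ← rpow_add_one (inv_pos.mpr ht).ne',
      inv_rpow ht.le, ← rpow_neg ht.le, hp]
    ring_nf
  have hwindow : 13 / 16 * t⁻¹ ≤ t⁻¹ - 2 / |x - y| := by
    have : 2 / |x - y| ≤ 3 / 16 * t⁻¹ := by
      rw [div_le_iff₀ hr, mul_right_comm, ← div_eq_mul_inv, le_div_iff₀ ht]
      linarith
    linarith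
  calc (1 - exp (-2)) * 2 ^ p * (13 / 16) * (t ^ α) ^ ((2 * H + α - 2) / α)
      = (1 - exp (-2)) * (2 * t⁻¹) ^ p * (13 / 16 * t⁻¹) := by
        rw [hscale, mul_rpow zero_le_two (inv_nonneg.mpr ht.le)]; ring
    _ ≤ (1 - exp (-2)) * (2 * t⁻¹) ^ p * (t⁻¹ - 2 / |x - y|) := by gcongr
    _ ≤ _ := hlow

theorem stmt_11 (α H : ℝ) (hα : 1 < α) (hα2 : α < 2)
    (hH1 : 1 - α / 2 < H) (hH2 : H < 1 / 2) :
    ∃ c > 0, ∀ x y : ℝ, x ≠ y → ∀ τ : ℝ, 0 < τ → τ ≤ (3 / 32) ^ α * |x - y| ^ α →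
      ∫ ξ in Set.Ioi (0:ℝ),
          (1 - Real.exp (-2 * τ * ξ ^ α)) * (1 - Real.cos (ξ * |x - y|)) * ξ ^ (1 - 2 * H - α)
        ≥ c * τ ^ ((2 * H + α - 2) / α) :=
  stmt_11_general α H hα hH1 hH2
end

section
/- Let $\alpha \in (1,2)$, $H \in (1-\alpha/2, 1/2)$, $t > 0$, and $h(\xi) = (1-e^{-2t\xi^{\alpha}})\,\xi^{1-2H-\alpha}$. Then there exists a constant $C > 0$ (depending on $t, H, \alpha$) such that for all $r \ge 1$, $\left|\int_0^{\infty} h(\xi)\,\cos(\xi r)\,d\xi\right| \le C\, r^{\frac{H-1}{2}}$. -/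
/-!
The paper's `h` is `expCutoffRpow (2 * t) α β` with `β = 1 - 2H - α < -1` and `α + β = 1 - 2H > 0`.
Near the origin `h ξ ≤ c ξ ^ (α + β)` is integrable, so `(0, δ]` contributes `O(δ ^ (α + β + 1))`.
On `(δ, ∞)` one integration by parts against `sin (ξ r) / r` gains a factor `1 / r`, at the cost of
`h δ = O(1)` and `∫_δ^∞ |h'| ≤ A + δ ^ β`, where `A` is the integral of the part of `h'` coming from
the cutoff. With `δ = r ^ (-1/4)` every term is `O(r ^ (-(α + β + 1) / 4))` as long as `α ≤ 3`, and
`-(α + β + 1) / 4 = (H - 1) / 2`.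
-/

open Real MeasureTheory Set Filter Topology

lemma one_sub_exp_neg_nonneg_s14 {x : ℝ} (hx : 0 ≤ x) : 0 ≤ 1 - exp (-x) :=
  sub_nonneg.2 (exp_le_one_iff.2 (neg_nonpos.2 hx))

lemma integrableOn_Ioc_const_mul_rpow (c : ℝ) {p δ : ℝ} (hp : -1 < p) (hδ : 0 ≤ δ) :
    IntegrableOn (fun ξ => c * ξ ^ p) (Ioc 0 δ) :=
  ((intervalIntegrable_iff_integrableOn_Ioc_of_le hδ).1
    (intervalIntegral.intervalIntegrable_rpow' hp)).const_mul c

theorem abs_integral_Ioi_mul_cos_le {u u' : ℝ → ℝ} {a r : ℝ} (hr : 0 < r)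
    (hu : ∀ x ∈ Ici a, HasDerivAt u (u' x) x) (hu_int : IntegrableOn u (Ioi a))
    (hu'_int : IntegrableOn u' (Ioi a)) (hu_lim : Tendsto u atTop (𝓝 0)) :
    |∫ x in Ioi a, u x * cos (x * r)| ≤ (|u a| + ∫ x in Ioi a, |u' x|) / r := by
  set v : ℝ → ℝ := fun x => sin (x * r) / r
  have hv : ∀ x, HasDerivAt v (cos (x * r)) x := fun x => by
    simpa [v, hr.ne'] using ((hasDerivAt_mul_const r).sin).div_const r
  have hv_bdd : ∀ x, |v x| ≤ r⁻¹ := fun x => by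
    simpa [v, abs_div, abs_of_pos hr, div_eq_mul_inv] using
      div_le_div_of_nonneg_right (abs_sin_le_one (x * r)) hr.le
  have hv_meas : AEStronglyMeasurable v (volume.restrict (Ioi a)) := by fun_prop
  have hibp := integral_Ioi_mul_deriv_eq_deriv_mul (fun x hx => hu x (mem_Ici_of_Ioi hx))
    (fun x _ => hv x)
    (hu_int.mul_bdd (by fun_prop) (ae_of_all _ fun x => abs_cos_le_one (x * r)))
    (hu'_int.mul_bdd hv_meas (ae_of_all _ hv_bdd))
    (((hu a self_mem_Ici).continuousAt.mul (hv a).continuousAt).tendsto.mono_left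
      nhdsWithin_le_nhds)
    (hu_lim.zero_mul_isBoundedUnder_le ⟨r⁻¹, eventually_map.2 (Eventually.of_forall hv_bdd)⟩)
  have h_tail : |∫ x in Ioi a, u' x * v x| ≤ (∫ x in Ioi a, |u' x|) / r := by
    rw [div_eq_mul_inv, ← integral_mul_const, ← Real.norm_eq_abs]
    refine norm_integral_le_of_norm_le (hu'_int.abs.mul_const _) (ae_of_all _ fun x => ?_)
    rw [norm_mul]
    exact mul_le_mul_of_nonneg_left (hv_bdd x) (norm_nonneg _)
  calc |∫ x in Ioi a, u x * cos (x * r)|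
      = |-(u a * v a) - ∫ x in Ioi a, u' x * v x| := by rw [hibp, zero_sub]; rfl
    _ ≤ |u a * v a| + |∫ x in Ioi a, u' x * v x| := by
      simpa using abs_sub (-(u a * v a)) _
    _ ≤ |u a| / r + (∫ x in Ioi a, |u' x|) / r := by
      gcongr
      rw [abs_mul, div_eq_mul_inv]
      exact mul_le_mul_of_nonneg_left (hv_bdd a) (abs_nonneg _)
    _ = (|u a| + ∫ x in Ioi a, |u' x|) / r := by ring

noncomputable def expCutoffRpow (c α β ξ : ℝ) : ℝ := (1 - exp (-(c * ξ ^ α))) * ξ ^ β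

section expCutoffRpow

variable {c α β ξ : ℝ}

lemma expCutoffRpow_nonneg (hc : 0 ≤ c) (hξ : 0 ≤ ξ) : 0 ≤ expCutoffRpow c α β ξ :=
  mul_nonneg (one_sub_exp_neg_nonneg_s14 (by positivity)) (rpow_nonneg hξ β)

lemma expCutoffRpow_le_rpow (hξ : 0 ≤ ξ) : expCutoffRpow c α β ξ ≤ ξ ^ β :=
  mul_le_of_le_one_left (rpow_nonneg hξ β) (sub_le_self 1 (exp_pos _).le)

lemma expCutoffRpow_le_mul_rpow_add (hξ : 0 < ξ) :
    expCutoffRpow c α β ξ ≤ c * ξ ^ (α + β) := by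
  rw [rpow_add hξ, ← mul_assoc]
  exact mul_le_mul_of_nonneg_right (sub_le_comm.1 (one_sub_le_exp_neg _)) (rpow_nonneg hξ.le β)

lemma measurable_expCutoffRpow : Measurable (expCutoffRpow c α β) := by
  unfold expCutoffRpow; fun_prop

lemma hasDerivAt_expCutoffRpow (hξ : 0 < ξ) :
    HasDerivAt (expCutoffRpow c α β)
      (c * α * ξ ^ (α + β - 1) * exp (-(c * ξ ^ α))
        + (1 - exp (-(c * ξ ^ α))) * (β * ξ ^ (β - 1))) ξ := by
  have hpow : HasDerivAt (fun x => -(c * x ^ α)) (-(c * (α * ξ ^ (α - 1)))) ξ :=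
    ((hasDerivAt_rpow_const (Or.inl hξ.ne')).const_mul c).neg
  refine ((hpow.exp.const_sub 1).mul (hasDerivAt_rpow_const (Or.inl hξ.ne'))).congr_deriv ?_
  rw [show α + β - 1 = (α - 1) + β by ring, rpow_add hξ]
  ring

lemma abs_deriv_expCutoffRpow_le (hc : 0 ≤ c) (hα : 0 ≤ α) (hξ : 0 < ξ) :
    |c * α * ξ ^ (α + β - 1) * exp (-(c * ξ ^ α))
        + (1 - exp (-(c * ξ ^ α))) * (β * ξ ^ (β - 1))|
      ≤ c * α * ξ ^ (α + β - 1) * exp (-(c * ξ ^ α)) + |β| * ξ ^ (β - 1) := by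
  have h0 : 0 ≤ 1 - exp (-(c * ξ ^ α)) := one_sub_exp_neg_nonneg_s14 (by positivity)
  refine (abs_add_le _ _).trans (add_le_add (abs_of_nonneg (by positivity)).le ?_)
  rw [abs_mul, abs_mul, abs_of_nonneg h0, abs_of_nonneg (rpow_nonneg hξ.le _)]
  exact mul_le_of_le_one_left (by positivity) (sub_le_self 1 (exp_pos _).le)

variable {δ : ℝ}

lemma integrableOn_Ioi_expCutoffRpow (hc : 0 ≤ c) (hβ : β < -1) (hδ : 0 < δ) :
    IntegrableOn (expCutoffRpow c α β) (Ioi δ) := by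
  refine (integrableOn_Ioi_rpow_of_lt hβ hδ).mono' measurable_expCutoffRpow.aestronglyMeasurable ?_
  filter_upwards [ae_restrict_mem measurableSet_Ioi] with ξ hξ
  have hξ0 : 0 ≤ ξ := hδ.le.trans hξ.le
  rw [norm_of_nonneg (expCutoffRpow_nonneg hc hξ0)]
  exact expCutoffRpow_le_rpow hξ0

lemma integrableOn_Ioc_expCutoffRpow (hc : 0 ≤ c) (hαβ : -1 < α + β) (hδ : 0 ≤ δ) :
    IntegrableOn (expCutoffRpow c α β) (Ioc 0 δ) := by
  refine (integrableOn_Ioc_const_mul_rpow c hαβ hδ).mono'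
    measurable_expCutoffRpow.aestronglyMeasurable ?_
  filter_upwards [ae_restrict_mem measurableSet_Ioc] with ξ hξ
  rw [norm_of_nonneg (expCutoffRpow_nonneg hc hξ.1.le)]
  exact expCutoffRpow_le_mul_rpow_add hξ.1

lemma abs_integral_Ioc_expCutoffRpow_mul_cos_le (hc : 0 ≤ c) (hαβ : -1 < α + β) (hδ : 0 ≤ δ)
    (r : ℝ) :
    |∫ ξ in Ioc 0 δ, expCutoffRpow c α β ξ * cos (ξ * r)|
      ≤ c * δ ^ (α + β + 1) / (α + β + 1) := by
  have hint : ∫ ξ in Ioc 0 δ, c * ξ ^ (α + β) = c * δ ^ (α + β + 1) / (α + β + 1) := by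
    rw [← intervalIntegral.integral_of_le hδ, intervalIntegral.integral_const_mul,
      integral_rpow (Or.inl hαβ), zero_rpow (by linarith)]
    ring
  rw [← hint, ← Real.norm_eq_abs]
  refine norm_integral_le_of_norm_le (integrableOn_Ioc_const_mul_rpow c hαβ hδ) ?_
  filter_upwards [ae_restrict_mem measurableSet_Ioc] with ξ hξ
  rw [norm_mul, norm_of_nonneg (expCutoffRpow_nonneg hc hξ.1.le)]
  exact mul_le_of_le_one_right (expCutoffRpow_nonneg hc hξ.1.le) (abs_cos_le_one _)
    |>.trans (expCutoffRpow_le_mul_rpow_add hξ.1)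

lemma tendsto_expCutoffRpow_atTop (hc : 0 ≤ c) (hβ : β < 0) :
    Tendsto (expCutoffRpow c α β) atTop (𝓝 0) := by
  have hpow : Tendsto (fun ξ : ℝ => ξ ^ β) atTop (𝓝 0) := by
    simpa using tendsto_rpow_neg_atTop (neg_pos.2 hβ)
  refine squeeze_zero' ?_ ?_ hpow
  · filter_upwards [eventually_ge_atTop 0] with ξ hξ using expCutoffRpow_nonneg hc hξ
  · filter_upwards [eventually_ge_atTop 0] with ξ hξ using expCutoffRpow_le_rpow hξ

lemma abs_integral_Ioi_expCutoffRpow_mul_cos_le (hc : 0 < c) (hα : 0 < α) (hβ : β < -1)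
    (hαβ : 0 < α + β) (hδ : 0 < δ) {r : ℝ} (hr : 0 < r) :
    |∫ ξ in Ioi δ, expCutoffRpow c α β ξ * cos (ξ * r)|
      ≤ (c * δ ^ (α + β)
          + (∫ ξ in Ioi 0, c * α * ξ ^ (α + β - 1) * exp (-(c * ξ ^ α))) + δ ^ β) / r := by
  set g : ℝ → ℝ := fun ξ => c * α * ξ ^ (α + β - 1) * exp (-(c * ξ ^ α))
  have hg : IntegrableOn g (Ioi 0) := by
    refine IntegrableOn.congr_fun ((integrableOn_rpow_mul_exp_neg_mul_rpow (s := α + β - 1)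
      (by linarith) hα hc).const_mul (c * α)) (fun ξ _ => ?_) measurableSet_Ioi
    simp only [g, neg_mul]
    ring
  have hg_nonneg : ∀ ξ ∈ Ioi (0 : ℝ), 0 ≤ g ξ := fun ξ hξ => by
    have := rpow_nonneg (le_of_lt hξ) (α + β - 1)
    positivity
  have hpow : IntegrableOn (fun ξ => |β| * ξ ^ (β - 1)) (Ioi δ) :=
    (integrableOn_Ioi_rpow_of_lt (by linarith) hδ).const_mul _
  have hbound : IntegrableOn (fun ξ => g ξ + |β| * ξ ^ (β - 1)) (Ioi δ) :=
    (hg.mono_set (Ioi_subset_Ioi hδ.le)).add hpow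
  have hderiv_le : ∀ ξ ∈ Ioi δ, |c * α * ξ ^ (α + β - 1) * exp (-(c * ξ ^ α))
      + (1 - exp (-(c * ξ ^ α))) * (β * ξ ^ (β - 1))| ≤ g ξ + |β| * ξ ^ (β - 1) :=
    fun ξ hξ => abs_deriv_expCutoffRpow_le hc.le hα.le (hδ.trans hξ)
  have hderiv_int : IntegrableOn (fun ξ => c * α * ξ ^ (α + β - 1) * exp (-(c * ξ ^ α))
      + (1 - exp (-(c * ξ ^ α))) * (β * ξ ^ (β - 1))) (Ioi δ) := by
    refine hbound.mono' (by fun_prop) ?_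
    filter_upwards [ae_restrict_mem measurableSet_Ioi] with ξ hξ using hderiv_le ξ hξ
  have htail : ∫ ξ in Ioi δ, |β| * ξ ^ (β - 1) = δ ^ β := by
    rw [integral_const_mul, integral_Ioi_rpow_of_lt (by linarith) hδ, sub_add_cancel,
      abs_of_neg (by linarith)]
    field_simp [show β ≠ 0 by linarith]
  refine (abs_integral_Ioi_mul_cos_le hr (fun ξ hξ => hasDerivAt_expCutoffRpow (hδ.trans_le hξ))
    (integrableOn_Ioi_expCutoffRpow hc.le hβ hδ) hderiv_int
    (tendsto_expCutoffRpow_atTop hc.le (by linarith))).trans ?_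
  gcongr ?_ / r
  have hδ_term : |expCutoffRpow c α β δ| ≤ c * δ ^ (α + β) := by
    rw [abs_of_nonneg (expCutoffRpow_nonneg hc.le hδ.le)]
    exact expCutoffRpow_le_mul_rpow_add hδ
  have hderiv_bound := setIntegral_mono_on hderiv_int.abs hbound measurableSet_Ioi hderiv_le
  have hg_le : ∫ ξ in Ioi δ, g ξ ≤ ∫ ξ in Ioi 0, g ξ :=
    setIntegral_mono_set hg ((ae_restrict_mem measurableSet_Ioi).mono hg_nonneg)
      (Ioi_subset_Ioi hδ.le).eventuallyLE
  rw [integral_add (hg.mono_set (Ioi_subset_Ioi hδ.le)) hpow, htail] at hderiv_bound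
  linarith

lemma abs_integral_expCutoffRpow_mul_cos_le (hc : 0 < c) (hα : 0 < α) (hβ : β < -1)
    (hαβ : 0 < α + β) (hδ : 0 < δ) {r : ℝ} (hr : 0 < r) :
    |∫ ξ in Ioi 0, expCutoffRpow c α β ξ * cos (ξ * r)|
      ≤ c * δ ^ (α + β + 1) / (α + β + 1) + (c * δ ^ (α + β)
          + (∫ ξ in Ioi 0, c * α * ξ ^ (α + β - 1) * exp (-(c * ξ ^ α))) + δ ^ β) / r := by
  have hcos : ∀ s : Set ℝ, IntegrableOn (expCutoffRpow c α β) s →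
      IntegrableOn (fun ξ => expCutoffRpow c α β ξ * cos (ξ * r)) s := fun s hs =>
    hs.mul_bdd (by fun_prop) (ae_of_all _ fun ξ => abs_cos_le_one (ξ * r))
  have hsplit : ∫ ξ in Ioi 0, expCutoffRpow c α β ξ * cos (ξ * r)
      = (∫ ξ in Ioc 0 δ, expCutoffRpow c α β ξ * cos (ξ * r))
        + ∫ ξ in Ioi δ, expCutoffRpow c α β ξ * cos (ξ * r) := by
    rw [← setIntegral_union Ioc_disjoint_Ioi_same measurableSet_Ioi
      (hcos _ (integrableOn_Ioc_expCutoffRpow hc.le (by linarith) hδ.le))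
      (hcos _ (integrableOn_Ioi_expCutoffRpow hc.le hβ hδ)), Ioc_union_Ioi_eq_Ioi hδ.le]
  rw [hsplit]
  exact (abs_add_le _ _).trans (add_le_add
    (abs_integral_Ioc_expCutoffRpow_mul_cos_le hc.le (by linarith) hδ.le r)
    (abs_integral_Ioi_expCutoffRpow_mul_cos_le hc hα hβ hαβ hδ hr))

theorem exists_abs_integral_expCutoffRpow_mul_cos_le (hc : 0 < c) (hα : α ≤ 3) (hβ : β < -1)
    (hαβ : 0 < α + β) :
    ∃ C > 0, ∀ r : ℝ, 1 ≤ r →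
      |∫ ξ in Ioi 0, expCutoffRpow c α β ξ * cos (ξ * r)| ≤ C * r ^ (-(α + β + 1) / 4) := by
  set A := ∫ ξ in Ioi 0, c * α * ξ ^ (α + β - 1) * exp (-(c * ξ ^ α))
  refine ⟨c / (α + β + 1) + c + |A| + 1, by positivity, fun r hr => ?_⟩
  have hr0 : 0 < r := one_pos.trans_le hr
  set δ := r ^ (-1 / 4 : ℝ)
  have hδ : 0 < δ := rpow_pos_of_pos hr0 _
  have hδ_pow : ∀ p : ℝ, δ ^ p = r ^ (-p / 4) := fun p => by
    rw [← rpow_mul hr0.le]; ring_nf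
  have hinv : r⁻¹ ≤ r ^ (-(α + β + 1) / 4) := by
    rw [← rpow_neg_one]; exact rpow_le_rpow_of_exponent_le hr (by linarith)
  have hδ_le : δ ^ (α + β) ≤ 1 :=
    rpow_le_one hδ.le (rpow_le_one_of_one_le_of_nonpos hr (by norm_num)) hαβ.le
  have hδβ : δ ^ β / r ≤ r ^ (-(α + β + 1) / 4) := by
    rw [hδ_pow, div_eq_mul_inv, ← rpow_neg_one, ← rpow_add hr0]
    exact rpow_le_rpow_of_exponent_le hr (by linarith)
  refine (abs_integral_expCutoffRpow_mul_cos_le hc (by linarith) hβ hαβ hδ hr0).trans ?_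
  have hcδ : c * δ ^ (α + β) * r⁻¹ ≤ c * r ^ (-(α + β + 1) / 4) := by
    rw [mul_assoc]
    exact mul_le_mul_of_nonneg_left
      ((mul_le_of_le_one_left (inv_nonneg.2 hr0.le) hδ_le).trans hinv) hc.le
  have hA : A * r⁻¹ ≤ |A| * r ^ (-(α + β + 1) / 4) :=
    (mul_le_mul_of_nonneg_right (le_abs_self A) (inv_nonneg.2 hr0.le)).trans
      (mul_le_mul_of_nonneg_left hinv (abs_nonneg A))
  calc c * δ ^ (α + β + 1) / (α + β + 1) + (c * δ ^ (α + β) + A + δ ^ β) / r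
      = c / (α + β + 1) * r ^ (-(α + β + 1) / 4) + c * δ ^ (α + β) * r⁻¹ + A * r⁻¹
          + δ ^ β / r := by
        rw [hδ_pow (α + β + 1)]; ring
    _ ≤ (c / (α + β + 1) + c + |A| + 1) * r ^ (-(α + β + 1) / 4) := by
        linarith

end expCutoffRpow

theorem stmt_14_general (α H : ℝ) (hα2 : α < 2)
    (hH1 : 1 - α / 2 < H) (hH2 : H < 1 / 2)
    (t : ℝ) (ht : 0 < t) :
    ∃ C > 0, ∀ r : ℝ, 1 ≤ r →
      |∫ ξ in Set.Ioi (0:ℝ),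
          ((1 - Real.exp (-2 * t * ξ ^ α)) * ξ ^ (1 - 2 * H - α)) * Real.cos (ξ * r)|
        ≤ C * r ^ ((H - 1) / 2) := by
  obtain ⟨C, hC, hbound⟩ := exists_abs_integral_expCutoffRpow_mul_cos_le
    (c := 2 * t) (α := α) (β := 1 - 2 * H - α) (by positivity) (by linarith) (by linarith)
    (by linarith)
  refine ⟨C, hC, fun r hr => ?_⟩
  have hexp : -(α + (1 - 2 * H - α) + 1) / 4 = (H - 1) / 2 := by ring
  simpa only [expCutoffRpow, neg_mul, hexp] using hbound r hr

theorem stmt_14 (α H : ℝ) (hα : 1 < α) (hα2 : α < 2)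
    (hH1 : 1 - α / 2 < H) (hH2 : H < 1 / 2)
    (t : ℝ) (ht : 0 < t) :
    ∃ C > 0, ∀ r : ℝ, 1 ≤ r →
      |∫ ξ in Set.Ioi (0:ℝ),
          ((1 - Real.exp (-2 * t * ξ ^ α)) * ξ ^ (1 - 2 * H - α)) * Real.cos (ξ * r)|
        ≤ C * r ^ ((H - 1) / 2) :=
  stmt_14_general α H hα2 hH1 hH2 t ht
end

section
/- Let $\beta > 0$ with $\beta = H + \alpha/2$ where $\alpha \in (1,2)$, $H \in (1-\alpha/2,1/2)$. Then there exists a constant $c > 0$ such that for all $r > 0$, $\int_r^{\infty}(1-\cos\xi)\,\xi^{-\beta-1}\,d\xi \ge c\,(r + 3\pi)^{-\beta}$. -/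
/-!
Pair each point `t > r + π` with `t - π`: since `cos (t - π) = -cos t` and `ξ ↦ ξ ^ (-β - 1)`
is decreasing, the integrand `(1 - cos ξ) ξ ^ (-β - 1)` at the two points sums to at least
`2 t ^ (-β - 1)`. Integrating, the integrals over `(r, ∞)` and `(r + π, ∞)` sum to at least
`2 ∫_{r+π}^∞ t ^ (-β - 1) dt = 2 (r + π) ^ (-β) / β`; as the first dominates the second, it is
at least `(r + π) ^ (-β) / β ≥ (r + 3π) ^ (-β) / β`.
-/

open Real MeasureTheory Set

namespace MeasureTheory

variable {E : Type*} [NormedAddCommGroup E]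

theorem IntegrableOn.comp_sub_right_Ioi {g : ℝ → E} {s : ℝ} (hg : IntegrableOn g (Ioi s))
    (a : ℝ) : IntegrableOn (fun x => g (x - a)) (Ioi (s + a)) := by
  rw [← preimage_sub_const_Ioi]
  exact ((measurePreserving_sub_right volume a).integrableOn_comp_preimage
    (measurableEmbedding_subRight a)).2 hg

theorem setIntegral_Ioi_comp_sub_right [NormedSpace ℝ E] (g : ℝ → E) (s a : ℝ) :
    ∫ x in Ioi (s + a), g (x - a) = ∫ x in Ioi s, g x := by
  rw [← preimage_sub_const_Ioi]
  exact (measurePreserving_sub_right volume a).setIntegral_preimage_emb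
    (measurableEmbedding_subRight a) g _

end MeasureTheory

theorem integrableOn_one_sub_cos_mul_rpow {p s : ℝ} (hp : p < -1) (hs : 0 < s) :
    IntegrableOn (fun ξ => (1 - cos ξ) * ξ ^ p) (Ioi s) := by
  refine (integrableOn_Ioi_rpow_of_lt hp hs).bdd_mul (c := 2) (by fun_prop) ?_
  refine Filter.Eventually.of_forall fun ξ => ?_
  rw [Real.norm_eq_abs, abs_le]
  constructor <;> linarith [neg_one_le_cos ξ, cos_le_one ξ]

theorem two_mul_rpow_le_one_sub_cos_mul_rpow_add {p t : ℝ} (hp : p ≤ 0) (ht : π < t) :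
    2 * t ^ p ≤ (1 - cos (t - π)) * (t - π) ^ p + (1 - cos t) * t ^ p := by
  have hmono : t ^ p ≤ (t - π) ^ p :=
    rpow_le_rpow_of_nonpos (by linarith) (by linarith [pi_pos]) hp
  have hcos : 0 ≤ 1 + cos t := by linarith [neg_one_le_cos t]
  rw [cos_sub_pi]
  nlinarith [mul_le_mul_of_nonneg_left hmono hcos]

theorem rpow_neg_div_le_integral_one_sub_cos_mul_rpow {β r : ℝ} (hβ : 0 < β) (hr : 0 < r) :
    (r + π) ^ (-β) / β ≤ ∫ ξ in Ioi r, (1 - cos ξ) * ξ ^ (-β - 1) := by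
  set f : ℝ → ℝ := fun ξ => (1 - cos ξ) * ξ ^ (-β - 1)
  have hp : -β - 1 < -1 := by linarith
  have hrπ : 0 < r + π := by linarith [pi_pos]
  have hf : IntegrableOn f (Ioi r) := integrableOn_one_sub_cos_mul_rpow hp hr
  have hf' : IntegrableOn f (Ioi (r + π)) := integrableOn_one_sub_cos_mul_rpow hp hrπ
  have htail_le : ∫ ξ in Ioi (r + π), f ξ ≤ ∫ ξ in Ioi r, f ξ := by
    refine setIntegral_mono_set hf ?_ (Ioi_subset_Ioi (by linarith [pi_pos])).eventuallyLE
    filter_upwards [self_mem_ae_restrict measurableSet_Ioi] with ξ hξ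
    have : 0 ≤ 1 - cos ξ := by linarith [cos_le_one ξ]
    have : 0 < ξ ^ (-β - 1) := rpow_pos_of_pos (hr.trans hξ) _
    positivity
  have hpaired : 2 * ∫ t in Ioi (r + π), t ^ (-β - 1)
      ≤ (∫ ξ in Ioi r, f ξ) + ∫ ξ in Ioi (r + π), f ξ := by
    rw [← setIntegral_Ioi_comp_sub_right f r π,
      ← integral_add (hf.comp_sub_right_Ioi π) hf', ← integral_const_mul]
    refine setIntegral_mono_on ((integrableOn_Ioi_rpow_of_lt hp hrπ).const_mul 2)
      ((hf.comp_sub_right_Ioi π).add hf') measurableSet_Ioi fun t ht => ?_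
    exact two_mul_rpow_le_one_sub_cos_mul_rpow_add (by linarith) (by linarith [mem_Ioi.1 ht])
  have hpow : ∫ t in Ioi (r + π), t ^ (-β - 1) = (r + π) ^ (-β) / β := by
    rw [integral_Ioi_rpow_of_lt hp hrπ, sub_add_cancel, neg_div, div_neg, neg_neg]
  linarith

theorem stmt_17_general (α H β : ℝ)
    (hH1 : 1 - α / 2 < H) (hβ : β = H + α / 2) :
    ∃ c > 0, ∀ r : ℝ, 0 < r →
      ∫ ξ in Set.Ioi r, (1 - Real.cos ξ) * ξ ^ (-β - 1)
        ≥ c * (r + 3 * π) ^ (-β) := by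
  have hβ0 : 0 < β := by linarith
  refine ⟨1 / β, by positivity, fun r hr => ?_⟩
  have hmono : (r + 3 * π) ^ (-β) ≤ (r + π) ^ (-β) :=
    rpow_le_rpow_of_nonpos (by linarith [pi_pos]) (by linarith [pi_pos]) (by linarith)
  calc 1 / β * (r + 3 * π) ^ (-β) ≤ (r + π) ^ (-β) / β := by
        rw [one_div_mul_eq_div]; gcongr
    _ ≤ _ := rpow_neg_div_le_integral_one_sub_cos_mul_rpow hβ0 hr

theorem stmt_17 (α H β : ℝ) (hα : 1 < α) (hα2 : α < 2)
    (hH1 : 1 - α / 2 < H) (hH2 : H < 1 / 2) (hβ : β = H + α / 2) :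
    ∃ c > 0, ∀ r : ℝ, 0 < r →
      ∫ ξ in Set.Ioi r, (1 - Real.cos ξ) * ξ ^ (-β - 1)
        ≥ c * (r + 3 * π) ^ (-β) :=
  stmt_17_general α H β hH1 hβ
end
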